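/- arXiv:2603.19494 — 7 statements merged into one kernel-verified Lean document; each statement's English description precedes it below -/
import Mathlib

section
/- Call a parking function on a nonempty finite set indecomposable (a block parking function) if it cannot be written as a concatenation Φ'|Φ'' of parking functions on two nonempty sets. Then every parking function on a nonempty finite set I can be written in exactly one way as a concatenation Φ^(1)|Φ^(2)|…|Φ^(k) of indecomposable parking functions (on nonempty sets). -/
/-- `L` is a weak set composition of the finite set `I`. -/
def IsWeakSetComp {α : Type*} [DecidableEq α] (I : Finset α) (L : List (Finset α)) : Prop :=
  L.Pairwise Disjoint ∧ L.foldr (· ∪ ·) ∅ = I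

/-- `L` is a parking function on the finite set `I`. -/
def IsParkingFunction {α : Type*} [DecidableEq α] (I : Finset α) (L : List (Finset α)) : Prop :=
  IsWeakSetComp I L ∧ L.length = I.card ∧
    ∀ k, 1 ≤ k → k ≤ L.length → k ≤ ((L.take k).map Finset.card).sum

/-- `L` is an indecomposable (block) parking function: it is a parking function on some
nonempty finite set, and it cannot be written as the concatenation of two parking
functions on two disjoint nonempty sets. -/
def IsBlockPF {α : Type*} [DecidableEq α] (L : List (Finset α)) : Prop :=
  (∃ I : Finset α, I.Nonempty ∧ IsParkingFunction I L) ∧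
    ¬ ∃ (L₁ L₂ : List (Finset α)) (S T : Finset α),
        S.Nonempty ∧ T.Nonempty ∧ Disjoint S T ∧
        IsParkingFunction S L₁ ∧ IsParkingFunction T L₂ ∧ L = L₁ ++ L₂

/-!
Write `c_k = |A_1| + ⋯ + |A_k|` for the prefix sums of a parking function `(A_1, …, A_n)`,
so that `c_k ≥ k` and `c_n = n`. Cutting at an index `0 < k < n` yields two parking functions
exactly when `c_k = k`, so a parking function is indecomposable iff `c_k > k` for all
`0 < k < n`. In any decomposition into indecomposables the first block therefore ends at the
first `k > 0` with `c_k = k`; cutting there and recursing gives existence, and comparing first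
blocks gives uniqueness.
-/

section

variable {α : Type*}

def totalCard (L : List (Finset α)) : ℕ := (L.map Finset.card).sum

@[simp]
lemma totalCard_append (L₁ L₂ : List (Finset α)) :
    totalCard (L₁ ++ L₂) = totalCard L₁ + totalCard L₂ := by
  simp [totalCard]

structure IsParkingList (L : List (Finset α)) : Prop where
  pairwise_disjoint : L.Pairwise Disjoint
  totalCard_eq : totalCard L = L.length
  le_totalCard_take : ∀ k, 1 ≤ k → k ≤ L.length → k ≤ totalCard (L.take k)

structure IsIndecomposable (L : List (Finset α)) : Prop extends IsParkingList L where
  ne_nil : L ≠ []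
  lt_totalCard_take : ∀ k, 0 < k → k < L.length → k < totalCard (L.take k)

namespace IsParkingList

variable {L : List (Finset α)} {k : ℕ}

lemma take (hL : IsParkingList L) (hk : k ≤ L.length) (hcut : totalCard (L.take k) = k) :
    IsParkingList (L.take k) where
  pairwise_disjoint := hL.pairwise_disjoint.sublist (L.take_sublist k)
  totalCard_eq := by simp [hcut, hk]
  le_totalCard_take j hj hjk := by
    have hjk : j ≤ k := hjk.trans (List.length_take_le k L)
    rw [List.take_take, min_eq_left hjk]
    exact hL.le_totalCard_take j hj (hjk.trans hk)

lemma drop (hL : IsParkingList L) (hk : k ≤ L.length) (hcut : totalCard (L.take k) = k) :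
    IsParkingList (L.drop k) where
  pairwise_disjoint := hL.pairwise_disjoint.sublist (L.drop_sublist k)
  totalCard_eq := by
    have hsplit := congrArg totalCard (L.take_append_drop k)
    rw [totalCard_append, hL.totalCard_eq, hcut] at hsplit
    simp only [List.length_drop]
    omega
  le_totalCard_take j hj hjk := by
    rw [List.length_drop] at hjk
    have h := hL.le_totalCard_take (k + j) (by omega) (by omega)
    rw [List.take_add, totalCard_append, hcut] at h
    omega

lemma exists_isIndecomposable_take (hL : IsParkingList L) (hne : L ≠ []) :
    ∃ k, 0 < k ∧ k ≤ L.length ∧ totalCard (L.take k) = k ∧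
      IsIndecomposable (L.take k) := by
  classical
  have hlen : 0 < L.length ∧ totalCard (L.take L.length) = L.length :=
    ⟨List.length_pos_iff.mpr hne, by rw [List.take_length, hL.totalCard_eq]⟩
  have hcut : ∃ k, 0 < k ∧ totalCard (L.take k) = k := ⟨L.length, hlen⟩
  obtain ⟨hk0, hk⟩ := Nat.find_spec hcut
  have hkle : Nat.find hcut ≤ L.length := Nat.find_min' hcut hlen
  refine ⟨Nat.find hcut, hk0, hkle, hk,
    { hL.take hkle hk with ne_nil := ?_, lt_totalCard_take := ?_ }⟩
  · exact List.ne_nil_of_length_pos (by rw [List.length_take]; exact lt_min hk0 hlen.1)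
  · intro j hj0 hjk
    rw [List.length_take] at hjk
    have hjk : j < Nat.find hcut := (lt_min_iff.mp hjk).1
    rw [List.take_take, min_eq_left hjk.le]
    refine (hL.le_totalCard_take j hj0 (by omega)).lt_of_ne fun h => ?_
    exact Nat.find_min hcut hjk ⟨hj0, h.symm⟩

end IsParkingList

lemma exists_isIndecomposable_flatten_eq {L : List (Finset α)} (hL : IsParkingList L) :
    ∃ Ls : List (List (Finset α)), Ls.flatten = L ∧ ∀ P ∈ Ls, IsIndecomposable P := by
  rcases eq_or_ne L [] with rfl | hne
  · exact ⟨[], rfl, by simp⟩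
  obtain ⟨k, hk0, hkle, hcut, hblock⟩ := hL.exists_isIndecomposable_take hne
  have : (L.drop k).length < L.length := by rw [List.length_drop]; omega
  obtain ⟨Ls, hflat, hblocks⟩ := exists_isIndecomposable_flatten_eq (hL.drop hkle hcut)
  refine ⟨L.take k :: Ls, by simp [hflat], ?_⟩
  simpa using ⟨hblock, hblocks⟩
termination_by L.length

lemma IsIndecomposable.length_le_of_append_eq {B C r s : List (Finset α)}
    (hC : IsIndecomposable C) (hB : IsParkingList B) (hB0 : B ≠ [])
    (h : B ++ r = C ++ s) : C.length ≤ B.length := by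
  by_contra! hlt
  have htake : C.take B.length = B := by
    rw [← List.take_append_of_le_length hlt.le, ← h, List.take_left]
  have := hC.lt_totalCard_take B.length (List.length_pos_iff.mpr hB0) hlt
  rw [htake, hB.totalCard_eq] at this
  exact this.false

lemma eq_of_flatten_eq_of_isIndecomposable {Ls Ls' : List (List (Finset α))}
    (h : Ls.flatten = Ls'.flatten) (hLs : ∀ P ∈ Ls, IsIndecomposable P)
    (hLs' : ∀ P ∈ Ls', IsIndecomposable P) : Ls = Ls' := by
  induction Ls generalizing Ls' with
  | nil =>
    have := List.flatten_eq_nil_iff.mp h.symm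
    cases Ls' with
    | nil => rfl
    | cons B' _ => exact absurd (this B' (by simp)) (hLs' B' (by simp)).ne_nil
  | cons B T ih =>
    cases Ls' with
    | nil => exact absurd (List.flatten_eq_nil_iff.mp h B (by simp)) (hLs B (by simp)).ne_nil
    | cons B' T' =>
      have hB := hLs B (by simp)
      have hB' := hLs' B' (by simp)
      rw [List.flatten_cons, List.flatten_cons] at h
      have hlen : B.length = B'.length :=
        le_antisymm (hB.length_le_of_append_eq hB'.toIsParkingList hB'.ne_nil h.symm)
          (hB'.length_le_of_append_eq hB.toIsParkingList hB.ne_nil h)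
      obtain ⟨rfl, hT⟩ := List.append_inj h hlen
      rw [ih hT (fun P hP => hLs P (by simp [hP])) (fun P hP => hLs' P (by simp [hP]))]

variable [DecidableEq α]

lemma mem_foldr_union {L : List (Finset α)} {a : α} :
    a ∈ L.foldr (· ∪ ·) ∅ ↔ ∃ s ∈ L, a ∈ s := by
  induction L with
  | nil => simp
  | cons b t ih => simp [ih]

lemma card_foldr_union {L : List (Finset α)} (h : L.Pairwise Disjoint) :
    (L.foldr (· ∪ ·) ∅).card = totalCard L := by
  induction L with
  | nil => simp [totalCard]
  | cons b t ih =>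
    rw [List.pairwise_cons] at h
    have hdisj : Disjoint b (t.foldr (· ∪ ·) ∅) :=
      Finset.disjoint_left.mpr fun a hab hat => by
        obtain ⟨s, hs, has⟩ := mem_foldr_union.mp hat
        exact Finset.disjoint_left.mp (h.1 s hs) hab has
    rw [List.foldr_cons, Finset.card_union_of_disjoint hdisj, ih h.2]
    simp [totalCard]

lemma disjoint_foldr_union_of_pairwise_append {L₁ L₂ : List (Finset α)}
    (h : (L₁ ++ L₂).Pairwise Disjoint) :
    Disjoint (L₁.foldr (· ∪ ·) ∅) (L₂.foldr (· ∪ ·) ∅) := by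
  rw [List.pairwise_append] at h
  refine Finset.disjoint_left.mpr fun a ha₁ ha₂ => ?_
  obtain ⟨s, hs, has⟩ := mem_foldr_union.mp ha₁
  obtain ⟨t, ht, hat⟩ := mem_foldr_union.mp ha₂
  exact Finset.disjoint_left.mp (h.2.2 s hs t ht) has hat

lemma isParkingFunction_iff {I : Finset α} {L : List (Finset α)} :
    IsParkingFunction I L ↔ IsParkingList L ∧ L.foldr (· ∪ ·) ∅ = I := by
  constructor
  · rintro ⟨⟨hdisj, hunion⟩, hlen, hprefix⟩
    refine ⟨⟨hdisj, ?_, hprefix⟩, hunion⟩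
    rw [← card_foldr_union hdisj, hunion, hlen]
  · rintro ⟨hL, hunion⟩
    refine ⟨⟨hL.pairwise_disjoint, hunion⟩, ?_, hL.le_totalCard_take⟩
    rw [← hunion, card_foldr_union hL.pairwise_disjoint, hL.totalCard_eq]

lemma IsParkingList.foldr_union_nonempty {L : List (Finset α)} (hL : IsParkingList L)
    (hne : L ≠ []) : (L.foldr (· ∪ ·) ∅).Nonempty := by
  rw [← Finset.card_pos, card_foldr_union hL.pairwise_disjoint, hL.totalCard_eq]
  exact List.length_pos_iff.mpr hne

lemma IsParkingList.exists_split {L : List (Finset α)} {k : ℕ} (hL : IsParkingList L)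
    (hk0 : 0 < k) (hkL : k < L.length) (hcut : totalCard (L.take k) = k) :
    ∃ (L₁ L₂ : List (Finset α)) (S T : Finset α),
      S.Nonempty ∧ T.Nonempty ∧ Disjoint S T ∧
      IsParkingFunction S L₁ ∧ IsParkingFunction T L₂ ∧ L = L₁ ++ L₂ := by
  have htake : L.take k ≠ [] := List.ne_nil_of_length_pos (by rw [List.length_take]; omega)
  have hdrop : L.drop k ≠ [] := List.ne_nil_of_length_pos (by rw [List.length_drop]; omega)
  refine ⟨L.take k, L.drop k, _, _, (hL.take hkL.le hcut).foldr_union_nonempty htake,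
    (hL.drop hkL.le hcut).foldr_union_nonempty hdrop, ?_,
    isParkingFunction_iff.mpr ⟨hL.take hkL.le hcut, rfl⟩,
    isParkingFunction_iff.mpr ⟨hL.drop hkL.le hcut, rfl⟩, (L.take_append_drop k).symm⟩
  exact disjoint_foldr_union_of_pairwise_append
    ((L.take_append_drop k).symm ▸ hL.pairwise_disjoint)

lemma isBlockPF_iff {L : List (Finset α)} : IsBlockPF L ↔ IsIndecomposable L := by
  constructor
  · rintro ⟨⟨I, hI, hLI⟩, hsplit⟩
    obtain ⟨hL, rfl⟩ := isParkingFunction_iff.mp hLI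
    refine { hL with ne_nil := ?_, lt_totalCard_take := ?_ }
    · rintro rfl
      simp at hI
    · intro k hk0 hkL
      exact (hL.le_totalCard_take k hk0 hkL.le).lt_of_ne fun hcut =>
        hsplit (hL.exists_split hk0 hkL hcut.symm)
  · intro hL
    refine ⟨⟨_, hL.foldr_union_nonempty hL.ne_nil,
      isParkingFunction_iff.mpr ⟨hL.toIsParkingList, rfl⟩⟩, ?_⟩
    rintro ⟨L₁, L₂, S, T, hS, hT, -, hL₁, hL₂, rfl⟩
    obtain ⟨hpark₁, rfl⟩ := isParkingFunction_iff.mp hL₁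
    obtain ⟨-, rfl⟩ := isParkingFunction_iff.mp hL₂
    have h₁ : 0 < L₁.length := List.length_pos_iff.mpr (by rintro rfl; simp at hS)
    have h₂ : 0 < L₂.length := List.length_pos_iff.mpr (by rintro rfl; simp at hT)
    have := hL.lt_totalCard_take L₁.length h₁ (by rw [List.length_append]; omega)
    rw [List.take_left, hpark₁.totalCard_eq] at this
    exact this.false

end

theorem unique_block_decomposition_general {α : Type*} [DecidableEq α]
    (I : Finset α) (Φ : List (Finset α))
    (hΦ : IsParkingFunction I Φ) :
    ∃! Ls : List (List (Finset α)), Ls.flatten = Φ ∧ ∀ P ∈ Ls, IsBlockPF P := by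
  simp only [isBlockPF_iff]
  obtain ⟨Ls, hflat, hblocks⟩ :=
    exists_isIndecomposable_flatten_eq (isParkingFunction_iff.mp hΦ).1
  refine ⟨Ls, ⟨hflat, hblocks⟩, fun Ls' ⟨hflat', hblocks'⟩ => ?_⟩
  exact eq_of_flatten_eq_of_isIndecomposable (hflat'.trans hflat.symm) hblocks' hblocks

theorem unique_block_decomposition {α : Type*} [DecidableEq α]
    (I : Finset α) (hI : I.Nonempty) (Φ : List (Finset α))
    (hΦ : IsParkingFunction I Φ) :
    ∃! Ls : List (List (Finset α)), Ls.flatten = Φ ∧ ∀ P ∈ Ls, IsBlockPF P :=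
  unique_block_decomposition_general I Φ hΦ
end

section
/- Let Γ = (B_1, …, B_n) and Γ' = (A_1, …, A_n) be weak set compositions (of possibly different finite sets) of the same length n such that A_i ⊆ B_i for all i. If the block B_i is discarded when the parkization algorithm is run on Γ, then the block A_i is discarded when the parkization algorithm is run on Γ'; equivalently, the set of positions kept by the parkization algorithm on Γ' is contained in the set of positions kept on Γ. -/
/-!
STATEMENT 3: Taking subsets.  If `Γ = (B_1, …, B_n)` and `Γ' = (A_1, …, A_n)` are weak
set compositions with `A_i ⊆ B_i` for all `i`, then the set of positions kept by the
parkization algorithm on `Γ'` is contained in the set of positions kept on `Γ`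
(equivalently, if `B_i` is discarded on `Γ` then `A_i` is discarded on `Γ'`).
-/

/-- `keptAux s l i Γ` computes the set of (0-indexed) positions of the blocks of `Γ`
kept by the parkization algorithm, where `s` is the number of elements kept so far,
`l` is the number of blocks kept so far, and `i` is the position of the first block
of `Γ` in the original list.  A block `B` is kept exactly when `s + |B| ≥ l + 1`. -/
def keptAux {α : Type*} [DecidableEq α] : ℕ → ℕ → ℕ → List (Finset α) → Finset ℕ
  | _, _, _, [] => ∅
  | s, l, i, B :: Γ =>
    if s + B.card ≥ l + 1 then insert i (keptAux (s + B.card) (l + 1) (i + 1) Γ)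
    else keptAux s l (i + 1) Γ

/-- The set of positions kept by the parkization algorithm on `Γ`. -/
def kept {α : Type*} [DecidableEq α] (Γ : List (Finset α)) : Finset ℕ :=
  keptAux 0 0 0 Γ


lemma keptAux_subset {α : Type*} [DecidableEq α] (Γ' : List (Finset α)) :
    ∀ (Γ : List (Finset α)) (s l s' l' i : ℕ),
    Γ'.length = Γ.length → (∀ j, Γ'.getD j ∅ ⊆ Γ.getD j ∅) → s' + l ≤ s + l' →
    keptAux s' l' i Γ' ⊆ keptAux s l i Γ := by
  induction Γ' with
  | nil => intro Γ s l s' l' i _ _ _; simp [keptAux]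
  | cons A rest ih =>
    intro Γ s l s' l' i hlen hsub hinv
    cases Γ with
    | nil => simp at hlen
    | cons B rest2 =>
      have hAB : A ⊆ B := hsub 0
      have hcard : A.card ≤ B.card := Finset.card_le_card hAB
      have hlen' : rest.length = rest2.length := by simpa using hlen
      have hsub' : ∀ j, rest.getD j ∅ ⊆ rest2.getD j ∅ := fun j => by
        simpa using hsub (j + 1)
      simp only [keptAux]
      by_cases hA : s' + A.card ≥ l' + 1
      · have hB : s + B.card ≥ l + 1 := by omega
        rw [if_pos hA, if_pos hB]
        exact Finset.insert_subset_insert _ (ih rest2 _ _ _ _ _ hlen' hsub' (by omega))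
      · rw [if_neg hA]
        by_cases hB : s + B.card ≥ l + 1
        · rw [if_pos hB]
          exact (ih rest2 _ _ _ _ _ hlen' hsub' (by omega)).trans
            (Finset.subset_insert _ _)
        · rw [if_neg hB]
          exact ih rest2 _ _ _ _ _ hlen' hsub' (by omega)

theorem kept_subset_of_blockwise_subset {α : Type*} [DecidableEq α]
    (Γ Γ' : List (Finset α))
    (hΓ : Γ.Pairwise Disjoint) (hΓ' : Γ'.Pairwise Disjoint)
    (hlen : Γ'.length = Γ.length)
    (hsub : ∀ i, Γ'.getD i ∅ ⊆ Γ.getD i ∅) :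
    kept Γ' ⊆ kept Γ := by
  exact keptAux_subset Γ' Γ 0 0 0 0 0 hlen hsub le_rfl
end

section
/- Let Φ be a parking function on a finite set I and let S ⊆ I. Then park(Φ_{∩S}) is a parking function on S; that is, the parkization algorithm applied to the restriction of a parking function produces a parking function. -/
/-- One pass of the parkization algorithm: `parkAux Φ Γ` scans the blocks of `Γ` from left
to right, keeping a block `B` (appending it to the accumulator `Φ`) exactly when
`|Φ| + |B| ≥ ℓ(Φ) + 1`, and discarding it otherwise. -/
def parkAux {α : Type*} [DecidableEq α] :
    List (Finset α) → List (Finset α) → List (Finset α)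
  | Φ, [] => Φ
  | Φ, B :: Γ =>
    if (Φ.map Finset.card).sum + B.card ≥ Φ.length + 1 then parkAux (Φ ++ [B]) Γ
    else parkAux Φ Γ

/-- The parkization of a list of blocks. -/
def park {α : Type*} [DecidableEq α] (Γ : List (Finset α)) : List (Finset α) :=
  parkAux [] Γ

section
variable {α : Type*} [DecidableEq α]

lemma foldr_union_map_inter (L : List (Finset α)) (S : Finset α) :
    (L.map (· ∩ S)).foldr (· ∪ ·) ∅ = L.foldr (· ∪ ·) ∅ ∩ S := by
  induction L with
  | nil => simp
  | cons B L ih => simp [ih, Finset.union_inter_distrib_right]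

lemma disjoint_foldr_union {B : Finset α} {L : List (Finset α)} (h : ∀ C ∈ L, Disjoint B C) :
    Disjoint B (L.foldr (· ∪ ·) ∅) := by
  induction L with
  | nil => simp
  | cons C L ih =>
    simp only [List.foldr_cons, Finset.disjoint_union_right]
    exact ⟨h C (by simp), ih fun D hD => h D (by simp [hD])⟩

lemma sum_card_eq_card_foldr_union {L : List (Finset α)} (h : L.Pairwise Disjoint) :
    (L.map Finset.card).sum = (L.foldr (· ∪ ·) ∅).card := by
  induction L with
  | nil => simp
  | cons B L ih =>
    rw [List.pairwise_cons] at h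
    simp only [List.map_cons, List.sum_cons, List.foldr_cons]
    rw [Finset.card_union_of_disjoint (disjoint_foldr_union h.1), ih h.2]

lemma sum_card_map_inter_le (L : List (Finset α)) (S : Finset α) :
    ((L.map (· ∩ S)).map Finset.card).sum ≤ (L.map Finset.card).sum := by
  induction L with
  | nil => simp
  | cons B L ih =>
    simp only [List.map_cons, List.sum_cons]
    exact Nat.add_le_add (Finset.card_le_card Finset.inter_subset_left) ih

lemma IsParkingFunction.sum_card_drop_le {I : Finset α} {Φ : List (Finset α)}
    (hΦ : IsParkingFunction I Φ) (k : ℕ) :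
    ((Φ.drop k).map Finset.card).sum ≤ (Φ.drop k).length := by
  obtain ⟨⟨hpw, hU⟩, hlen, hpk⟩ := hΦ
  have htotal := List.sum_take_add_sum_drop (Φ.map Finset.card) k
  rw [sum_card_eq_card_foldr_union hpw, hU, ← List.map_take, ← List.map_drop] at htotal
  rw [List.length_drop]
  rcases Nat.eq_zero_or_pos k with rfl | hk
  · simp only [List.take_zero, List.map_nil, List.sum_nil, zero_add] at htotal
    omega
  rcases le_or_gt Φ.length k with hk' | hk'
  · simp [List.drop_eq_nil_of_le hk']
  · have := hpk k hk hk'.le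
    omega

lemma parkAux_sublist (acc Γ : List (Finset α)) : (parkAux acc Γ).Sublist (acc ++ Γ) := by
  induction Γ generalizing acc with
  | nil => simp [parkAux]
  | cons B Γ ih =>
    rw [parkAux]
    split
    · simpa using ih (acc ++ [B])
    · exact (ih acc).trans ((List.append_sublist_append_left acc).2 (List.sublist_cons_self B Γ))

lemma parkAux_le_sum_card_take (acc Γ : List (Finset α))
    (h : ∀ k ≤ acc.length, k ≤ ((acc.take k).map Finset.card).sum) :
    ∀ k ≤ (parkAux acc Γ).length, k ≤ (((parkAux acc Γ).take k).map Finset.card).sum := by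
  induction Γ generalizing acc with
  | nil => simpa [parkAux] using h
  | cons B Γ ih =>
    rw [parkAux]
    split
    next hkeep =>
      refine ih _ fun k hk => ?_
      rw [List.length_append, List.length_singleton] at hk
      rcases Nat.lt_or_ge k (acc.length + 1) with hlt | hge
      · rw [List.take_append_of_le_length (by omega)]
        exact h k (by omega)
      · rw [List.take_of_length_le (by simp; omega)]
        simp only [List.map_append, List.sum_append, List.map_singleton, List.sum_singleton]
        omega
    next => exact ih acc h

lemma parkAux_foldr_union (acc Γ : List (Finset α))
    (hacc : acc.length ≤ (acc.map Finset.card).sum) :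
    (parkAux acc Γ).foldr (· ∪ ·) ∅ = (acc ++ Γ).foldr (· ∪ ·) ∅ := by
  induction Γ generalizing acc with
  | nil => simp [parkAux]
  | cons B Γ ih =>
    rw [parkAux]
    split
    next hkeep =>
      rw [ih (acc ++ [B]) (by simp; omega)]
      simp
    next hskip =>
      have hB : B = ∅ := Finset.card_eq_zero.mp (by omega)
      rw [ih acc hacc, hB]
      simp [List.foldr_append]

lemma parkAux_length (acc Γ : List (Finset α))
    (hacc : acc.length ≤ (acc.map Finset.card).sum)
    (hsum : (acc.map Finset.card).sum + (Γ.map Finset.card).sum ≤ acc.length + Γ.length)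
    (hsuffix : ∀ k, ((Γ.drop k).map Finset.card).sum ≤ (Γ.drop k).length) :
    (parkAux acc Γ).length = (acc.map Finset.card).sum + (Γ.map Finset.card).sum := by
  induction Γ generalizing acc with
  | nil =>
    simp only [parkAux, List.map_nil, List.sum_nil, List.length_nil] at *
    omega
  | cons B Γ ih =>
    have hsuffix' : ∀ k, ((Γ.drop k).map Finset.card).sum ≤ (Γ.drop k).length :=
      fun k => by simpa using hsuffix (k + 1)
    simp only [List.map_cons, List.sum_cons, List.length_cons] at hsum ⊢
    rw [parkAux]
    split
    next hkeep =>
      rw [ih (acc ++ [B]) (by simp; omega) (by simp; omega) hsuffix']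
      simp only [List.map_append, List.sum_append, List.map_singleton, List.sum_singleton]
      omega
    next hskip =>
      -- a skipped block is empty and leaves the accumulator with `|acc| = ℓ(acc)`
      have := hsuffix' 0
      simp only [List.drop_zero] at this
      rw [ih acc hacc (by omega) hsuffix']
      omega

end

theorem park_restrict_isParkingFunction {α : Type*} [DecidableEq α]
    (I S : Finset α) (hS : S ⊆ I) (Φ : List (Finset α))
    (hΦ : IsParkingFunction I Φ) :
    IsParkingFunction S (park (Φ.map (· ∩ S))) := by
  set Γ := Φ.map (· ∩ S)
  have hpw : Γ.Pairwise Disjoint :=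
    hΦ.1.1.map _ fun _ _ h => h.mono Finset.inter_subset_left Finset.inter_subset_left
  have hU : Γ.foldr (· ∪ ·) ∅ = S := by
    rw [foldr_union_map_inter, hΦ.1.2, Finset.inter_eq_right.mpr hS]
  have hsuffix (k : ℕ) : ((Γ.drop k).map Finset.card).sum ≤ (Γ.drop k).length := by
    rw [← List.map_drop, List.length_map]
    exact (sum_card_map_inter_le _ S).trans (hΦ.sum_card_drop_le k)
  have hlen := parkAux_length [] Γ le_rfl (by simpa using hsuffix 0) hsuffix
  unfold park
  refine ⟨⟨hpw.sublist (by simpa using parkAux_sublist [] Γ), ?_⟩, ?_, ?_⟩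
  · simpa [hU] using parkAux_foldr_union [] Γ le_rfl
  · simpa [sum_card_eq_card_foldr_union hpw, hU] using hlen
  · exact fun k _ hk => parkAux_le_sum_card_take [] Γ (by simp) k hk
end

section
/- Let I = R ⊔ S ⊔ T be a decomposition of a finite set I into pairwise disjoint subsets, and let Φ be a parking function on I. Then park( park(Φ_{∩(S∪T)})_{∩S} ) = park(Φ_{∩S}). (This identity yields coassociativity of the coproduct Δ_{S,T}(Φ) = park(Φ_{∩S}) ⊗ park(Φ_{∩T}) on the species of parking functions.) -/
/-- `parkFrom d Γ` is the parkization of `Γ` started with running excess `d`. -/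
def parkFrom {α : Type*} [DecidableEq α] (d : ℕ) : List (Finset α) → List (Finset α)
  | [] => []
  | B :: Γ => if d + B.card ≥ 1 then B :: parkFrom (d + B.card - 1) Γ else parkFrom d Γ

theorem parkAux_eq_append_parkFrom {α : Type*} [DecidableEq α] (Γ : List (Finset α)) :
    ∀ (acc : List (Finset α)) (d : ℕ),
      (acc.map Finset.card).sum = acc.length + d → parkAux acc Γ = acc ++ parkFrom d Γ := by
  induction Γ with
  | nil => simp [parkAux, parkFrom]
  | cons B Γ ih =>
    intro acc d h
    rw [parkAux, parkFrom]
    by_cases hkeep : d + B.card ≥ 1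
    · rw [if_pos (by omega), if_pos hkeep,
        ih (acc ++ [B]) (d + B.card - 1) (by simp [h]; omega)]
      simp
    · rw [if_neg (by omega), if_neg hkeep, ih acc d h]

theorem park_eq_parkFrom_zero {α : Type*} [DecidableEq α] (Γ : List (Finset α)) :
    park Γ = parkFrom 0 Γ := by
  simpa [park] using parkAux_eq_append_parkFrom Γ [] 0 (by simp)

theorem parkFrom_map_parkFrom {α β : Type*} [DecidableEq α] [DecidableEq β]
    (f : Finset α → Finset β) (hf : ∀ B, (f B).card ≤ B.card) (Γ : List (Finset α)) :
    ∀ d e : ℕ, e ≤ d → parkFrom e ((parkFrom d Γ).map f) = parkFrom e (Γ.map f) := by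
  induction Γ with
  | nil => simp [parkFrom]
  | cons B Γ ih =>
    intro d e hed
    have hfB := hf B
    by_cases hkeep : d + B.card ≥ 1
    · rw [parkFrom, if_pos hkeep]
      simp only [List.map_cons, parkFrom]
      by_cases hkeep' : e + (f B).card ≥ 1
      · rw [if_pos hkeep', if_pos hkeep', ih _ _ (by omega)]
      · rw [if_neg hkeep', if_neg hkeep', ih _ _ (by omega)]
    · rw [parkFrom, if_neg hkeep]
      simp only [List.map_cons, parkFrom]
      rw [if_neg (by omega), ih d e hed]

theorem park_restrict_coassoc_general {α : Type*} [DecidableEq α]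
    (S T : Finset α) (Φ : List (Finset α)) :
    park ((park (Φ.map (· ∩ (S ∪ T)))).map (· ∩ S)) = park (Φ.map (· ∩ S)) := by
  have hrestrict : (fun B : Finset α => B ∩ S) ∘ (· ∩ (S ∪ T)) = (· ∩ S) := by
    funext B
    simp [Function.comp, Finset.inter_assoc, Finset.union_inter_cancel_left]
  simp only [park_eq_parkFrom_zero]
  rw [parkFrom_map_parkFrom (· ∩ S) (fun B => Finset.card_le_card Finset.inter_subset_left)
    _ 0 0 le_rfl, List.map_map, hrestrict]

theorem park_restrict_coassoc {α : Type*} [DecidableEq α]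
    (R S T : Finset α) (hRS : Disjoint R S) (hRT : Disjoint R T) (hST : Disjoint S T)
    (Φ : List (Finset α)) (hΦ : IsParkingFunction (R ∪ S ∪ T) Φ) :
    park ((park (Φ.map (· ∩ (S ∪ T)))).map (· ∩ S)) = park (Φ.map (· ∩ S)) :=
  park_restrict_coassoc_general S T Φ
end

section
/- Let σ be a permutation of a finite set I and let S ⊆ T ⊆ I. Then the first-return (induced) permutations compose: (σ|_T)|_S = σ|_S. (This gives coassociativity of the restriction coproduct Δ_{S,T}(γ) = γ|_S ⊗ γ|_T on the comonoid of cycles used to build the Hopf monoid of bijections.) -/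
/-!
STATEMENT 8: For a permutation `σ` of a finite set `I` and `S ⊆ T ⊆ I`, the induced
(first-return) permutations compose: `(σ|_T)|_S = σ|_S`.
-/

variable {α : Type*} [Fintype α] [DecidableEq α]

set_option linter.unusedSectionVars false

/-- For `a ∈ S`, there is `k ≥ 1` with `σ^k a ∈ S` (the orbit of `a` returns to `S`). -/
lemma exists_return (σ : Equiv.Perm α) (S : Finset α) {a : α} (ha : a ∈ S) :
    ∃ k : ℕ, 0 < k ∧ (σ ^ k) a ∈ S :=
  ⟨orderOf σ, orderOf_pos σ, by rw [pow_orderOf_eq_one]; simpa using ha⟩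

/-- The first-return map of `σ` to `S`, as a function on `α`: a point `a ∈ S` is sent to
`σ^k a` where `k ≥ 1` is minimal with `σ^k a ∈ S`, and points outside `S` are fixed. -/
def frFun (σ : Equiv.Perm α) (S : Finset α) (a : α) : α :=
  if h : a ∈ S then (σ ^ Nat.find (exists_return σ S h)) a else a

lemma frFun_mem (σ : Equiv.Perm α) (S : Finset α) {a : α} (ha : a ∈ S) :
    frFun σ S a ∈ S := by
  rw [frFun, dif_pos ha]
  exact (Nat.find_spec (exists_return σ S ha)).2

private lemma frFun_inj_aux (σ : Equiv.Perm α) (S : Finset α) {a b : α}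
    (ha : a ∈ S) (hb : b ∈ S)
    (hle : Nat.find (exists_return σ S ha) ≤ Nat.find (exists_return σ S hb))
    (hab : (σ ^ Nat.find (exists_return σ S ha)) a
          = (σ ^ Nat.find (exists_return σ S hb)) b) :
    a = b := by
  set ka := Nat.find (exists_return σ S ha) with hka
  set kb := Nat.find (exists_return σ S hb) with hkb
  have hk : kb = ka + (kb - ka) := by omega
  have h1 : (σ ^ ka) a = (σ ^ ka) ((σ ^ (kb - ka)) b) := by
    rw [hab]
    conv_lhs => rw [hk]
    rw [pow_add, Equiv.Perm.mul_apply]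
  have h2 : a = (σ ^ (kb - ka)) b := (σ ^ ka).injective h1
  rcases Nat.eq_zero_or_pos (kb - ka) with h0 | h0
  · rw [h0, pow_zero] at h2
    simpa using h2
  · exfalso
    have hlt : kb - ka < kb := by
      have hka0 : 0 < ka := (Nat.find_spec (exists_return σ S ha)).1
      omega
    have := Nat.find_min (exists_return σ S hb) hlt
    exact this ⟨h0, h2 ▸ ha⟩

lemma frFun_injective (σ : Equiv.Perm α) (S : Finset α) :
    Function.Injective (frFun σ S) := by
  intro a b hab
  by_cases ha : a ∈ S <;> by_cases hb : b ∈ S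
  · rw [frFun, dif_pos ha, frFun, dif_pos hb] at hab
    rcases le_total (Nat.find (exists_return σ S ha)) (Nat.find (exists_return σ S hb))
      with h | h
    · exact frFun_inj_aux σ S ha hb h hab
    · exact (frFun_inj_aux σ S hb ha h hab.symm).symm
  · exfalso
    have := frFun_mem σ S ha
    rw [hab, frFun, dif_neg hb] at this
    exact hb this
  · exfalso
    have := frFun_mem σ S hb
    rw [← hab, frFun, dif_neg ha] at this
    exact ha this
  · rwa [frFun, dif_neg ha, frFun, dif_neg hb] at hab

/-- The induced (first-return) permutation `σ|_S` of `σ` on `S`, extended by the identity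
outside of `S`. -/
noncomputable def frPerm (σ : Equiv.Perm α) (S : Finset α) : Equiv.Perm α :=
  Equiv.ofBijective (frFun σ S)
    ((Finite.injective_iff_bijective).mp (frFun_injective σ S))

lemma frPerm_apply (σ : Equiv.Perm α) (S : Finset α) (a : α) :
    frPerm σ S a = frFun σ S a := rfl

/-- Key lemma: the `n`-th iterate of the first-return map to `T` is `σ^j a` for some `j ≥ n`
with `σ^j a ∈ T`, and every return time `i ≤ j` to `T` is realized by some iterate `n' ≤ n`. -/
lemma key (σ : Equiv.Perm α) (T : Finset α) {a : α} (ha : a ∈ T) :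
    ∀ n : ℕ, ∃ j : ℕ, n ≤ j ∧ (σ ^ j) a ∈ T ∧ ((frPerm σ T) ^ n) a = (σ ^ j) a ∧
      ∀ i, 0 < i → i ≤ j → (σ ^ i) a ∈ T →
        ∃ n', 0 < n' ∧ n' ≤ n ∧ ((frPerm σ T) ^ n') a = (σ ^ i) a := by
  intro n
  induction n with
  | zero =>
    exact ⟨0, le_refl 0, by simpa using ha, by simp, fun i hi hij _ => absurd (hi.trans_le hij)
      (by simp)⟩
  | succ n IH =>
    obtain ⟨j, hnj, hjT, heq, hcov⟩ := IH
    set d := Nat.find (exists_return σ T hjT) with hd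
    have hd1 : 0 < d := (Nat.find_spec (exists_return σ T hjT)).1
    have hdT : (σ ^ d) ((σ ^ j) a) ∈ T := (Nat.find_spec (exists_return σ T hjT)).2
    have hpow : (σ ^ (j + d)) a = (σ ^ d) ((σ ^ j) a) := by
      rw [add_comm, pow_add, Equiv.Perm.mul_apply]
    refine ⟨j + d, by omega, hpow ▸ hdT, ?_, ?_⟩
    · have : ((frPerm σ T) ^ (n + 1)) a = frPerm σ T (((frPerm σ T) ^ n) a) := by
        rw [pow_succ' (frPerm σ T) n, Equiv.Perm.mul_apply]
      rw [this, heq, frPerm_apply, frFun, dif_pos hjT, ← hd, hpow]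
    · intro i hi hij hiT
      rcases le_or_gt i j with h | h
      · obtain ⟨n', h1, h2, h3⟩ := hcov i hi h hiT
        exact ⟨n', h1, h2.trans (Nat.le_succ n), h3⟩
      · have hsplit : (σ ^ i) a = (σ ^ (i - j)) ((σ ^ j) a) := by
          have hij' : i - j + j = i := by omega
          conv_lhs => rw [← hij']
          rw [pow_add, Equiv.Perm.mul_apply]
        have hge : d ≤ i - j := by
          by_contra hlt
          push_neg at hlt
          exact Nat.find_min (exists_return σ T hjT) hlt ⟨by omega, hsplit ▸ hiT⟩
        have hieq : i - j = d := le_antisymm (by omega) hge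
        refine ⟨n + 1, Nat.succ_pos n, le_refl _, ?_⟩
        have : ((frPerm σ T) ^ (n + 1)) a = frPerm σ T (((frPerm σ T) ^ n) a) := by
          rw [pow_succ' (frPerm σ T) n, Equiv.Perm.mul_apply]
        rw [this, heq, frPerm_apply, frFun, dif_pos hjT, ← hd, hsplit, hieq]

theorem frPerm_frPerm (I S T : Finset α) (σ : Equiv.Perm α)
    (hσ : ∀ a ∉ I, σ a = a) (hST : S ⊆ T) (hTI : T ⊆ I) :
    frPerm (frPerm σ T) S = frPerm σ S := by
  ext a
  rw [frPerm_apply, frPerm_apply]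
  by_cases ha : a ∈ S
  · have haT : a ∈ T := hST ha
    rw [frFun, dif_pos ha, frFun, dif_pos ha]
    set k := Nat.find (exists_return σ S ha) with hk
    have hk1 : 0 < k := (Nat.find_spec (exists_return σ S ha)).1
    have hkS : (σ ^ k) a ∈ S := (Nat.find_spec (exists_return σ S ha)).2
    obtain ⟨j, hkj, hjT, heq, hcov⟩ := key σ T haT k
    obtain ⟨n0, hn0pos, hn0le, hn0eq⟩ := hcov k hk1 hkj (hST hkS)
    set m := Nat.find (exists_return (frPerm σ T) S ha) with hm
    have hm1 : 0 < m := (Nat.find_spec (exists_return (frPerm σ T) S ha)).1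
    have hmS : ((frPerm σ T) ^ m) a ∈ S := (Nat.find_spec (exists_return (frPerm σ T) S ha)).2
    obtain ⟨j', hmj', hj'T, heq', hcov'⟩ := key σ T haT m
    have hj'S : (σ ^ j') a ∈ S := heq' ▸ hmS
    have hkj' : k ≤ j' := Nat.find_min' _ ⟨hm1.trans_le hmj', hj'S⟩
    rcases eq_or_lt_of_le hkj' with hE | hL
    · rw [heq', ← hE]
    · obtain ⟨n'', hp, hle, heqq⟩ := hcov' k hk1 hL.le (hST hkS)
      have h1 : m ≤ n'' := Nat.find_min' _ ⟨hp, heqq ▸ hkS⟩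
      have h2 : n'' = m := le_antisymm hle h1
      rw [← h2, heqq]
  · rw [frFun, dif_neg ha, frFun, dif_neg ha]
end

section
/- Let γ be a cyclic permutation of a finite set I (that is, I is a single γ-orbit), and let S ⊆ I be nonempty. Then the induced permutation γ|_S is a cyclic permutation of S (that is, S is a single γ|_S-orbit). -/
/-!
STATEMENT 9: If `γ` is a cyclic permutation of a finite set `I` (i.e. `I` is a single
`γ`-orbit) and `S ⊆ I` is nonempty, then the induced (first-return) permutation `γ|_S`
is a cyclic permutation of `S` (i.e. `S` is a single `γ|_S`-orbit).
-/

variable {α : Type*} [Fintype α] [DecidableEq α]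

set_option linter.unusedSectionVars false

lemma frPerm_reach (σ : Equiv.Perm α) (S : Finset α) :
    ∀ n : ℕ, ∀ x ∈ S, (σ ^ n) x ∈ S → ∃ m : ℕ, ((frPerm σ S) ^ m) x = (σ ^ n) x := by
  intro n
  induction n using Nat.strong_induction_on with
  | _ n ih =>
    intro x hx hnx
    rcases Nat.eq_zero_or_pos n with rfl | hn
    · exact ⟨0, by simp⟩
    · set k := Nat.find (exists_return σ S hx) with hk
      have hkle : k ≤ n := Nat.find_le ⟨hn, hnx⟩
      have hmem : (σ ^ k) x ∈ S := (Nat.find_spec (exists_return σ S hx)).2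
      have hrest : (σ ^ (n - k)) ((σ ^ k) x) ∈ S := by
        rw [← Equiv.Perm.mul_apply, ← pow_add, Nat.sub_add_cancel hkle]
        exact hnx
      obtain ⟨m, hm⟩ := ih (n - k) (by
        have : 0 < k := (Nat.find_spec (exists_return σ S hx)).1
        omega) _ hmem hrest
      refine ⟨m + 1, ?_⟩
      have hfr : (frPerm σ S) x = (σ ^ k) x := by
        show frFun σ S x = _
        rw [frFun, dif_pos hx]
      rw [pow_succ, Equiv.Perm.mul_apply, hfr, hm, ← Equiv.Perm.mul_apply, ← pow_add,
        Nat.sub_add_cancel hkle]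

theorem frPerm_isCycleOn (I S : Finset α) (γ : Equiv.Perm α)
    (hγ : ∀ a ∉ I, γ a = a) (hcyc : γ.IsCycleOn (I : Set α))
    (hSI : S ⊆ I) (hS : S.Nonempty) :
    (frPerm γ S).IsCycleOn (S : Set α) := by
  constructor
  · refine ⟨fun a ha => frFun_mem γ S ha, (frFun_injective γ S).injOn, ?_⟩
    intro y hy
    refine ⟨(frPerm γ S).symm y, ?_, Equiv.apply_symm_apply _ _⟩
    by_contra h
    have : frPerm γ S ((frPerm γ S).symm y) = (frPerm γ S).symm y := by
      show frFun γ S _ = _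
      rw [frFun, dif_neg (by simpa using h)]
    rw [Equiv.apply_symm_apply] at this
    rw [← this] at h
    exact h hy
  · intro x hx y hy
    have hsc : γ.SameCycle x y := hcyc.2 ((Finset.coe_subset.mpr hSI) hx) ((Finset.coe_subset.mpr hSI) hy)
    obtain ⟨n, -, hn⟩ := hsc.exists_pow_eq'
    have hyS : (γ ^ n) x ∈ S := by rw [hn]; exact hy
    obtain ⟨m, hm⟩ := frPerm_reach γ S n x hx hyS
    exact ⟨(m : ℤ), by rw [zpow_natCast, hm, hn]⟩
end

section
/- Let S and T be disjoint finite sets, σ' a permutation of S and σ'' a permutation of T. Then the map (τ', τ'') ↦ τ' ⊎ τ'' is an order isomorphism from the product poset {τ' : τ' ≤ σ'} × {τ'' : τ'' ≤ σ''} (lower order ideals in the restriction orders on permutations of S and of T, with the product order) onto the lower order ideal {τ : τ ≤ σ' ⊎ σ''} in the restriction order on permutations of S ∪ T. In particular, lower order ideals in the restriction poset of bijections are product posets. -/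
/-!
Permutations of a finite subset of `α` are encoded as permutations of `α` fixing the
complement pointwise; the juxtaposition `σ' ⊎ σ''` is then the product `σ' * σ''`.

`RestrLE τ σ` is a conjunction of conditions at the single points `a`, and the condition at
`a` only sees `τ` and `σ` on any set containing `a` that both preserve. At a point of `S`
the products `τ' * τ''` and `σ' * σ''` act as `τ'` and `σ'`, at a point of `T` as `τ''` and
`σ''`, and elsewhere everything is fixed; so `τ' * τ'' ≤ σ' * σ''` iff `τ' ≤ σ'` and
`τ'' ≤ σ''`. Conversely, any `τ ≤ σ' * σ''` preserves `S` and fixes the points outside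
`S ∪ T`, hence splits as such a product.
-/

variable {α : Type*} [Fintype α] [DecidableEq α]

/-- The restriction order on permutations: `RestrLE τ σ` holds iff every `τ`-orbit is
contained in a `σ`-orbit and, for every `a`, `τ a = σ^k a` where `k ≥ 1` is minimal such
that `σ^k a` lies in the `τ`-orbit of `a` (i.e. `τ` acts on each of its orbits as the
first-return map of `σ`). -/
def RestrLE (τ σ : Equiv.Perm α) : Prop :=
  (∀ a b : α, τ.SameCycle a b → σ.SameCycle a b) ∧
  ∀ a : α, ∃ k : ℕ, 0 < k ∧ τ a = (σ ^ k) a ∧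
    ∀ j : ℕ, 0 < j → j < k → ¬ τ.SameCycle a ((σ ^ j) a)

open Set Equiv

section

variable {β : Type*} {f g : Perm β} {s t : Set β}

theorem Set.EqOn.perm_pow (hf : MapsTo f s s) (h : EqOn f g s) :
    ∀ n : ℕ, EqOn ⇑(f ^ n) ⇑(g ^ n) s
  | 0 => fun _ _ => rfl
  | n + 1 => fun x hx => by
    rw [pow_succ, pow_succ, Perm.mul_apply, Perm.mul_apply, ← h hx]
    exact h.perm_pow hf n (hf hx)

namespace Equiv.Perm

theorem mapsTo_of_forall_notMem_apply_eq (h : ∀ a ∉ s, f a = a) : MapsTo f s s := fun a ha =>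
  by_contra fun hfa => hfa (by rwa [f.injective (h _ hfa)])

theorem eq_of_eqOn (hf : ∀ a ∉ s, f a = a) (hg : ∀ a ∉ s, g a = a) (h : EqOn f g s) :
    f = g := by
  ext a
  by_cases ha : a ∈ s
  exacts [h ha, (hf a ha).trans (hg a ha).symm]

theorem eqOn_mul_left (hst : _root_.Disjoint s t) (hg : ∀ a ∉ t, g a = a) : EqOn (f * g) f s :=
  fun _ ha => congrArg f (hg _ (disjoint_left.1 hst ha))

theorem eqOn_mul_right (hst : _root_.Disjoint s t) (hf : ∀ a ∉ s, f a = a)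
    (hg : ∀ a ∉ t, g a = a) : EqOn (f * g) g t :=
  fun _ ha => hf _ (disjoint_right.1 hst (mapsTo_of_forall_notMem_apply_eq hg ha))

theorem mapsTo_mul_left (hst : _root_.Disjoint s t) (hf : ∀ a ∉ s, f a = a)
    (hg : ∀ a ∉ t, g a = a) : MapsTo ⇑(f * g) s s :=
  (eqOn_mul_left hst hg).mapsTo_iff.2 (mapsTo_of_forall_notMem_apply_eq hf)

theorem mapsTo_mul_right (hst : _root_.Disjoint s t) (hf : ∀ a ∉ s, f a = a)
    (hg : ∀ a ∉ t, g a = a) : MapsTo ⇑(f * g) t t :=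
  (eqOn_mul_right hst hf hg).mapsTo_iff.2 (mapsTo_of_forall_notMem_apply_eq hg)

theorem eq_and_eq_of_mul_eq_mul {p₁ q₁ p₂ q₂ : Perm β} (hst : _root_.Disjoint s t)
    (hp₁ : ∀ a ∉ s, p₁ a = a) (hq₁ : ∀ a ∉ s, q₁ a = a)
    (hp₂ : ∀ a ∉ t, p₂ a = a) (hq₂ : ∀ a ∉ t, q₂ a = a) (h : p₁ * p₂ = q₁ * q₂) :
    p₁ = q₁ ∧ p₂ = q₂ :=
  ⟨eq_of_eqOn hp₁ hq₁ fun a ha => by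
      rw [← eqOn_mul_left hst hp₂ ha, h, eqOn_mul_left hst hq₂ ha],
    eq_of_eqOn hp₂ hq₂ fun a ha => by
      rw [← eqOn_mul_right hst hp₁ hp₂ ha, h, eqOn_mul_right hst hq₁ hq₂ ha]⟩

theorem sameCycle_of_eqOn [Finite β] {x y : β} (hf : MapsTo f s s) (h : EqOn f g s)
    (hx : x ∈ s) (hxy : f.SameCycle x y) : g.SameCycle x y := by
  obtain ⟨n, rfl⟩ := hxy.exists_nat_pow_eq
  rw [h.perm_pow hf n hx]
  exact sameCycle_pow_right.2 (SameCycle.refl g x)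

theorem sameCycle_iff_of_eqOn [Finite β] {x y : β} (hf : MapsTo f s s) (h : EqOn f g s)
    (hx : x ∈ s) : f.SameCycle x y ↔ g.SameCycle x y :=
  ⟨sameCycle_of_eqOn hf h hx, sameCycle_of_eqOn (h.mapsTo_iff.1 hf) h.symm hx⟩

theorem exists_mul_eq_of_mapsTo [Finite β] {τ : Perm β} (hτ : MapsTo τ s s)
    (hfix : ∀ a ∉ s ∪ t, τ a = a) :
    ∃ τ₁ τ₂ : Perm β, (∀ a ∉ s, τ₁ a = a) ∧ (∀ a ∉ t, τ₂ a = a) ∧ τ₁ * τ₂ = τ := by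
  classical
  have hs : ∀ a, τ a ∈ s ↔ a ∈ s := fun a =>
    ⟨fun h => by simpa using perm_symm_mapsTo_of_mapsTo τ hτ h, fun h => hτ h⟩
  have hsc : ∀ a, τ a ∉ s ↔ a ∉ s := fun a => not_congr (hs a)
  refine ⟨ofSubtype (τ.subtypePerm hs), ofSubtype (τ.subtypePerm (p := (· ∉ s)) hsc),
    fun a ha => ofSubtype_apply_of_not_mem _ ha, fun a hat => ?_, ext fun a => ?_⟩
  · by_cases has : a ∈ s
    · exact ofSubtype_subtypePerm_of_not_mem (p := (· ∉ s)) hsc (not_not.2 has)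
    · rw [ofSubtype_subtypePerm_of_mem (p := (· ∉ s)) hsc has, hfix a (by simp [has, hat])]
  · by_cases has : a ∈ s
    · rw [mul_apply, ofSubtype_subtypePerm_of_not_mem (p := (· ∉ s)) hsc (not_not.2 has),
        ofSubtype_subtypePerm_of_mem hs has]
    · rw [mul_apply, ofSubtype_subtypePerm_of_mem (p := (· ∉ s)) hsc has,
        ofSubtype_apply_of_not_mem _ ((hsc a).2 has)]

end Equiv.Perm

variable {τ σ τ₁ σ₁ τ₂ σ₂ : Perm β} {a : β}

def RestrLEAt (τ σ : Perm β) (a : β) : Prop :=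
  (∀ b : β, τ.SameCycle a b → σ.SameCycle a b) ∧
  ∃ k : ℕ, 0 < k ∧ τ a = (σ ^ k) a ∧ ∀ j : ℕ, 0 < j → j < k → ¬ τ.SameCycle a ((σ ^ j) a)

theorem restrLE_iff_forall_restrLEAt : RestrLE τ σ ↔ ∀ a, RestrLEAt τ σ a :=
  forall_and.symm

theorem restrLEAt_of_apply_eq_self (hτ : τ a = a) (hσ : σ a = a) : RestrLEAt τ σ a := by
  refine ⟨fun b hb => ?_, 1, one_pos, by rw [hτ, pow_one, hσ], fun j hj hj1 => by omega⟩
  obtain ⟨i, rfl⟩ := hb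
  rw [Perm.zpow_apply_eq_self_of_apply_eq_self hτ]

theorem RestrLE.mapsTo (h : RestrLE τ σ) (hσ : MapsTo σ s s) : MapsTo τ s s := fun a ha => by
  obtain ⟨k, -, hk, -⟩ := h.2 a
  exact hk ▸ hσ.perm_pow k ha

theorem RestrLE.apply_eq_self (h : RestrLE τ σ) (hσ : σ a = a) : τ a = a :=
  mapsTo_singleton.1 (h.mapsTo (mapsTo_singleton.2 hσ))

theorem restrLEAt_congr [Finite β] (hτ : MapsTo τ₁ s s) (hσ : MapsTo σ₁ s s)
    (hτe : EqOn τ₁ τ₂ s) (hσe : EqOn σ₁ σ₂ s) (ha : a ∈ s) :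
    RestrLEAt τ₁ σ₁ a ↔ RestrLEAt τ₂ σ₂ a := by
  simp only [RestrLEAt, Perm.sameCycle_iff_of_eqOn hτ hτe ha,
    Perm.sameCycle_iff_of_eqOn hσ hσe ha, hτe ha, hσe.perm_pow hσ _ ha]

theorem restrLE_mul_mul_iff [Finite β] {p₁ q₁ p₂ q₂ : Perm β} (hst : Disjoint s t)
    (hp₁ : ∀ a ∉ s, p₁ a = a) (hq₁ : ∀ a ∉ s, q₁ a = a)
    (hp₂ : ∀ a ∉ t, p₂ a = a) (hq₂ : ∀ a ∉ t, q₂ a = a) :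
    RestrLE (p₁ * p₂) (q₁ * q₂) ↔ RestrLE p₁ q₁ ∧ RestrLE p₂ q₂ := by
  simp only [restrLE_iff_forall_restrLEAt, ← forall_and]
  refine forall_congr' fun a => ?_
  by_cases has : a ∈ s
  · have hat : a ∉ t := disjoint_left.1 hst has
    rw [restrLEAt_congr (Perm.mapsTo_mul_left hst hp₁ hp₂) (Perm.mapsTo_mul_left hst hq₁ hq₂)
      (Perm.eqOn_mul_left hst hp₂) (Perm.eqOn_mul_left hst hq₂) has,
      and_iff_left (restrLEAt_of_apply_eq_self (hp₂ a hat) (hq₂ a hat))]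
  by_cases hat : a ∈ t
  · rw [restrLEAt_congr (Perm.mapsTo_mul_right hst hp₁ hp₂) (Perm.mapsTo_mul_right hst hq₁ hq₂)
      (Perm.eqOn_mul_right hst hp₁ hp₂) (Perm.eqOn_mul_right hst hq₁ hq₂) hat,
      and_iff_right (restrLEAt_of_apply_eq_self (hp₁ a has) (hq₁ a has))]
  · exact iff_of_true
      (restrLEAt_of_apply_eq_self (by rw [Perm.mul_apply, hp₂ a hat, hp₁ a has])
        (by rw [Perm.mul_apply, hq₂ a hat, hq₁ a has]))
      ⟨restrLEAt_of_apply_eq_self (hp₁ a has) (hq₁ a has),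
        restrLEAt_of_apply_eq_self (hp₂ a hat) (hq₂ a hat)⟩

end

theorem lowerIdeal_prod_orderIso (S T : Finset α) (hST : Disjoint S T)
    (σ' σ'' : Equiv.Perm α)
    (hσ' : ∀ a ∉ S, σ' a = a) (hσ'' : ∀ a ∉ T, σ'' a = a) :
    ∃ e : {τ : Equiv.Perm α // RestrLE τ σ'} × {τ : Equiv.Perm α // RestrLE τ σ''} ≃
          {τ : Equiv.Perm α // RestrLE τ (σ' * σ'')},
      (∀ p, ((e p : {τ : Equiv.Perm α // RestrLE τ (σ' * σ'')}) : Equiv.Perm α)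
          = (p.1 : Equiv.Perm α) * (p.2 : Equiv.Perm α)) ∧
      (∀ p q, (RestrLE (p.1 : Equiv.Perm α) (q.1 : Equiv.Perm α) ∧
               RestrLE (p.2 : Equiv.Perm α) (q.2 : Equiv.Perm α)) ↔
          RestrLE ((e p : {τ : Equiv.Perm α // RestrLE τ (σ' * σ'')}) : Equiv.Perm α)
                  ((e q : {τ : Equiv.Perm α // RestrLE τ (σ' * σ'')}) : Equiv.Perm α)) := by
  have hST' : Disjoint (S : Set α) T := Finset.disjoint_coe.2 hST
  have fix₁ (τ : {τ // RestrLE τ σ'}) : ∀ a ∉ S, (τ : Perm α) a = a :=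
    fun a ha => τ.2.apply_eq_self (hσ' a ha)
  have fix₂ (τ : {τ // RestrLE τ σ''}) : ∀ a ∉ T, (τ : Perm α) a = a :=
    fun a ha => τ.2.apply_eq_self (hσ'' a ha)
  have hle_iff (p q : {τ // RestrLE τ σ'} × {τ // RestrLE τ σ''}) :=
    restrLE_mul_mul_iff hST' (fix₁ p.1) (fix₁ q.1) (fix₂ p.2) (fix₂ q.2)
  let e (p : {τ // RestrLE τ σ'} × {τ // RestrLE τ σ''}) : {τ // RestrLE τ (σ' * σ'')} :=
    ⟨p.1 * p.2, (restrLE_mul_mul_iff hST' (fix₁ p.1) hσ' (fix₂ p.2) hσ'').2 ⟨p.1.2, p.2.2⟩⟩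
  have he_inj : Function.Injective e := by
    rintro ⟨p₁, p₂⟩ ⟨q₁, q₂⟩ h
    obtain ⟨h₁, h₂⟩ := Perm.eq_and_eq_of_mul_eq_mul hST' (fix₁ p₁) (fix₁ q₁) (fix₂ p₂) (fix₂ q₂)
      (congrArg Subtype.val h)
    exact Prod.ext (Subtype.ext h₁) (Subtype.ext h₂)
  have he_surj : Function.Surjective e := by
    rintro ⟨τ, hτ⟩
    obtain ⟨τ₁, τ₂, h₁, h₂, rfl⟩ := Perm.exists_mul_eq_of_mapsTo (t := T)
      (hτ.mapsTo (Perm.mapsTo_mul_left hST' hσ' hσ'')) fun a ha => by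
        obtain ⟨haS, haT⟩ := not_or.1 ha
        exact hτ.apply_eq_self (by rw [Perm.mul_apply, hσ'' a haT, hσ' a haS])
    obtain ⟨hle₁, hle₂⟩ := (restrLE_mul_mul_iff hST' h₁ hσ' h₂ hσ'').1 hτ
    exact ⟨(⟨τ₁, hle₁⟩, ⟨τ₂, hle₂⟩), rfl⟩
  exact ⟨Equiv.ofBijective e ⟨he_inj, he_surj⟩, fun p => rfl, fun p q => (hle_iff p q).symm⟩
end
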